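/- arXiv:1002.1092 — 2 statements merged into one kernel-verified Lean document; each statement's English description precedes it below -/
import Mathlib

section
/- Let S be a finite family of closed real intervals such that no real number is contained in k or more of the intervals (counted with multiplicity). Then S contains a subfamily of size at least |S|/k consisting of pairwise disjoint intervals. -/
open Finset

lemma aux_disjoint_subfamily
    (n k : ℕ) (hk : 1 ≤ k) (a b : Fin n → ℝ) (hab : ∀ i, a i ≤ b i)
    (hdepth : ∀ t : ℝ,
      (Finset.univ.filter (fun i : Fin n => t ∈ Set.Icc (a i) (b i))).card ≤ k - 1)
    (s : Finset (Fin n)) :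
    ∃ I' : Finset (Fin n), I' ⊆ s ∧ s.card ≤ k * I'.card ∧
      (I' : Set (Fin n)).Pairwise
        (fun i j => Disjoint (Set.Icc (a i) (b i)) (Set.Icc (a j) (b j))) := by
  induction s using Finset.strongInductionOn with
  | _ s ih =>
    rcases s.eq_empty_or_nonempty with rfl | hs
    · exact ⟨∅, Finset.Subset.refl _, by simp, by simp⟩
    · obtain ⟨m, hm, hmin⟩ := s.exists_min_image b hs
      set T := s.filter (fun i => b m ∈ Set.Icc (a i) (b i)) with hT
      have hmT : m ∈ T := by
        simp [hT, hm, Set.mem_Icc, hab m]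
      have hTk : T.card ≤ k := by
        calc T.card ≤ (Finset.univ.filter (fun i : Fin n => b m ∈ Set.Icc (a i) (b i))).card := by
              apply Finset.card_le_card
              intro i hi
              simp only [hT, Finset.mem_filter] at hi ⊢
              exact ⟨Finset.mem_univ _, hi.2⟩
          _ ≤ k - 1 := hdepth (b m)
          _ ≤ k := Nat.sub_le _ _
      have hssub : s \ T ⊂ s := by
        refine Finset.sdiff_ssubset ?_ ⟨m, hmT⟩
        exact Finset.filter_subset _ _
      obtain ⟨I', hI's, hcard, hpair⟩ := ih (s \ T) hssub
      have hmI' : m ∉ I' := fun h => (Finset.mem_sdiff.mp (hI's h)).2 hmT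
      refine ⟨insert m I', ?_, ?_, ?_⟩
      · intro i hi
        rcases Finset.mem_insert.mp hi with rfl | hi
        · exact hm
        · exact (Finset.mem_sdiff.mp (hI's hi)).1
      · rw [Finset.card_insert_of_notMem hmI', Nat.mul_succ]
        have h1 : (s \ T).card = s.card - T.card :=
          Finset.card_sdiff_of_subset (Finset.filter_subset _ _)
        have h2 : s.card ≤ (s \ T).card + k := by
          rw [h1]; omega
        omega
      · -- pairwise disjointness
        have key : ∀ i ∈ I', Disjoint (Set.Icc (a m) (b m)) (Set.Icc (a i) (b i)) := by
          intro i hi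
          have his : i ∈ s \ T := hI's hi
          have hnT : b m ∉ Set.Icc (a i) (b i) := by
            intro h
            exact (Finset.mem_sdiff.mp his).2
              (Finset.mem_filter.mpr ⟨(Finset.mem_sdiff.mp his).1, h⟩)
          have hbi : b m ≤ b i := hmin i (Finset.mem_sdiff.mp his).1
          rw [Set.disjoint_left]
          rintro t ⟨ht1, ht2⟩ ⟨ht3, ht4⟩
          exact hnT ⟨le_trans ht3 ht2, hbi⟩
        intro i hi j hj hij
        simp only [Finset.coe_insert, Set.mem_insert_iff] at hi hj
        rcases hi with rfl | hi <;> rcases hj with rfl | hj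
        · exact absurd rfl hij
        · exact key j hj
        · exact (key i hi).symm
        · exact hpair hi hj hij

theorem disjoint_subfamily_of_bounded_depth
    (n k : ℕ) (hk : 1 ≤ k) (a b : Fin n → ℝ) (hab : ∀ i, a i ≤ b i)
    (hdepth : ∀ t : ℝ,
      (Finset.univ.filter (fun i : Fin n => t ∈ Set.Icc (a i) (b i))).card ≤ k - 1) :
    ∃ I' : Finset (Fin n),
      n ≤ k * I'.card ∧
      (I' : Set (Fin n)).Pairwise
        (fun i j => Disjoint (Set.Icc (a i) (b i)) (Set.Icc (a j) (b j))) := by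
  obtain ⟨I', _, hcard, hpair⟩ :=
    aux_disjoint_subfamily n k hk a b hab hdepth Finset.univ
  exact ⟨I', by simpa using hcard, hpair⟩
end

section
/- Decision-tree shattering bound: In a linear decision tree over ℝ^d, the region of points reaching a leaf at depth i is an intersection of at most i open or closed halfspaces, hence is convex; consequently, if a leaf region intersects more than i·k pairwise-disjoint convex regions from a family in k-general position (no hyperplane meets k or more of them), then the leaf region entirely contains at least one of those convex regions. -/
open scoped RealInnerProductSpace Classical

/-- If a convex set contains points on both sides of the level `b` of the
linear functional `⟪a, ·⟫`, it contains a point on the hyperplane. -/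
lemma convex_crosses_hyperplane {E : Type*} [NormedAddCommGroup E]
    [InnerProductSpace ℝ E] (a : E) (b : ℝ) {C : Set E} (hC : Convex ℝ C)
    {x y : E} (hx : x ∈ C) (hy : y ∈ C)
    (h1 : ⟪a, x⟫ ≤ b) (h2 : b ≤ ⟪a, y⟫) :
    ∃ z ∈ C, ⟪a, z⟫ = b := by
  set f : ℝ → ℝ := fun t => (1 - t) * ⟪a, x⟫ + t * ⟪a, y⟫ with hf
  have hcont : ContinuousOn f (Set.Icc (0:ℝ) 1) := by
    apply Continuous.continuousOn; fun_prop
  have hmem : b ∈ Set.Icc (f 0) (f 1) := by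
    simp [hf]; constructor <;> linarith
  obtain ⟨t, ht, hft⟩ := intermediate_value_Icc (by norm_num : (0:ℝ) ≤ 1) hcont hmem
  refine ⟨(1 - t) • x + t • y, hC hx hy (by linarith [ht.2]) ht.1 (by ring), ?_⟩
  rw [inner_add_right, real_inner_smul_right, real_inner_smul_right]
  simpa [hf] using hft

/-- Decision-tree shattering bound: the region of points reaching a leaf of a
linear decision tree at depth `i` is an intersection `Pw` of at most `i` open
or closed halfspaces.  If `F` is a family of pairwise-disjoint convex regions
in `k`-general position (no hyperplane meets `k` or more members of `F`) and
`Pw` intersects more than `i·k` members of `F`, then `Pw` entirely contains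
some member of `F`. -/
theorem leaf_region_contains_member
    (d i k : ℕ)
    (a : Fin i → EuclideanSpace ℝ (Fin d)) (b : Fin i → ℝ)
    (ha : ∀ j, a j ≠ 0)
    (H : Fin i → Set (EuclideanSpace ℝ (Fin d)))
    (hH : ∀ j, H j = {x | ⟪a j, x⟫ < b j} ∨ H j = {x | ⟪a j, x⟫ ≤ b j})
    (Pw : Set (EuclideanSpace ℝ (Fin d))) (hPw : Pw = ⋂ j, H j)
    (F : Finset (Set (EuclideanSpace ℝ (Fin d))))
    (hconv : ∀ C ∈ F, Convex ℝ C)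
    (hdisj : (F : Set (Set (EuclideanSpace ℝ (Fin d)))).Pairwise Disjoint)
    (hgen : ∀ (a' : EuclideanSpace ℝ (Fin d)) (b' : ℝ), a' ≠ 0 →
      (F.filter (fun C => (C ∩ {x | ⟪a', x⟫ = b'}).Nonempty)).card < k)
    (hmany : i * k < (F.filter (fun C => (C ∩ Pw).Nonempty)).card) :
    ∃ C ∈ F, C ⊆ Pw := by
  by_contra hcon
  push_neg at hcon
  -- every member meeting Pw crosses some bounding hyperplane
  have hsub : F.filter (fun C => (C ∩ Pw).Nonempty) ⊆
      (Finset.univ : Finset (Fin i)).biUnion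
        (fun j => F.filter (fun C => (C ∩ {x | ⟪a j, x⟫ = b j}).Nonempty)) := by
    intro C hC
    rw [Finset.mem_filter] at hC
    obtain ⟨hCF, x, hxC, hxP⟩ := hC
    obtain ⟨y, hyC, hyP⟩ := Set.not_subset.mp (hcon C hCF)
    rw [hPw, Set.mem_iInter] at hyP
    push_neg at hyP
    obtain ⟨j, hyj⟩ := hyP
    have hxj : x ∈ H j := by
      rw [hPw] at hxP; exact Set.mem_iInter.mp hxP j
    have hcross : ∃ z ∈ C, ⟪a j, z⟫ = b j := by
      rcases hH j with h | h <;> rw [h] at hxj hyj <;>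
        simp only [Set.mem_setOf_eq, not_lt, not_le] at hxj hyj
      · exact convex_crosses_hyperplane (a j) (b j) (hconv C hCF) hxC hyC hxj.le hyj
      · exact convex_crosses_hyperplane (a j) (b j) (hconv C hCF) hxC hyC hxj hyj.le
    obtain ⟨z, hzC, hz⟩ := hcross
    exact Finset.mem_biUnion.mpr ⟨j, Finset.mem_univ j,
      Finset.mem_filter.mpr ⟨hCF, z, hzC, hz⟩⟩
  have hcard : (F.filter (fun C => (C ∩ Pw).Nonempty)).card ≤ i * (k - 1) := by
    calc (F.filter (fun C => (C ∩ Pw).Nonempty)).card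
        ≤ ((Finset.univ : Finset (Fin i)).biUnion
            (fun j => F.filter (fun C => (C ∩ {x | ⟪a j, x⟫ = b j}).Nonempty))).card :=
          Finset.card_le_card hsub
      _ ≤ ∑ j : Fin i, (F.filter (fun C => (C ∩ {x | ⟪a j, x⟫ = b j}).Nonempty)).card :=
          Finset.card_biUnion_le
      _ ≤ ∑ _j : Fin i, (k - 1) :=
          Finset.sum_le_sum (fun j _ => Nat.le_pred_of_lt (hgen (a j) (b j) (ha j)))
      _ = i * (k - 1) := by simp [Finset.sum_const, Nat.mul_comm]
  have : i * (k - 1) ≤ i * k := Nat.mul_le_mul_left i (Nat.sub_le k 1)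
  omega
end
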